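/- For all indices 1 ≤ i < j < k ≤ r and all A ∈ V_ij, B ∈ V_ik, one has the identity ‖ ‖A‖_F²·B − n_j·A·(Aᵀ·B) ‖_F² = ‖A‖_F² · ( ‖A‖_F²·‖B‖_F² − n_j·‖Aᵀ·B‖_F² ). Consequently, ‖A‖_F²·‖B‖_F² = n_j·‖Aᵀ·B‖_F² holds if and only if ‖A‖_F²·B = n_j·A·(Aᵀ·B). -/

import Mathlib

noncomputable section
open scoped Classical
open Matrix

/-- A face of a convex cone `C`: a nonempty convex subset `F ⊆ C` such that whenever the open
segment between two points of `C` meets `F`, both endpoints lie in `F`. -/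
def IsFaceOf {E : Type*} [AddCommGroup E] [Module ℝ E] (F C : Set E) : Prop :=
  F.Nonempty ∧ F ⊆ C ∧ Convex ℝ F ∧
    ∀ x ∈ C, ∀ y ∈ C, (∃ t : ℝ, 0 < t ∧ t < 1 ∧ t • x + (1 - t) • y ∈ F) → x ∈ F ∧ y ∈ F

/-- An extreme ray of `C`: a face whose linear span is one-dimensional. -/
def IsExtremeRayOf {E : Type*} [AddCommGroup E] [Module ℝ E] (R C : Set E) : Prop :=
  IsFaceOf R C ∧ Module.finrank ℝ (Submodule.span ℝ R) = 1

/-- `x` is a sum of at most `m` points, each lying on an extreme ray of `C`. -/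
def SumExtreme {E : Type*} [AddCommGroup E] [Module ℝ E] (C : Set E) (m : ℕ) (x : E) : Prop :=
  ∃ (k : ℕ) (f : Fin k → E), k ≤ m ∧ (∀ i, ∃ R, IsExtremeRayOf R C ∧ f i ∈ R) ∧ x = ∑ i, f i

/-- The Carathéodory number of the cone `C`. -/
def caraNumber {E : Type*} [AddCommGroup E] [Module ℝ E] (C : Set E) : ℕ :=
  sInf {m | ∀ x ∈ C, SumExtreme C m x}

/-- The ray generated by a point. -/
def ray {E : Type*} [AddCommGroup E] [Module ℝ E] (A : E) : Set E :=
  {X | ∃ c : ℝ, 0 ≤ c ∧ X = c • A}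

/-- The trace (Frobenius) inner product on spaces of rectangular real matrices. -/
def trInner {a b : Type*} [Fintype a] [Fintype b] (X Y : Matrix a b ℝ) : ℝ :=
  Matrix.trace (Xᵀ * Y)

/-- `y` is the orthogonal projection of `x` onto the subspace `W` (with respect to the
trace inner product). -/
def IsProjOn {a b : Type*} [Fintype a] [Fintype b] (W : Set (Matrix a b ℝ))
    (x y : Matrix a b ℝ) : Prop :=
  y ∈ W ∧ ∀ w ∈ W, trInner (x - y) w = 0

/-- The image of the set `S` under orthogonal projection onto the subspace `W`. -/
def projSet {a b : Type*} [Fintype a] [Fintype b] (W S : Set (Matrix a b ℝ)) :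
    Set (Matrix a b ℝ) :=
  {y | ∃ x ∈ S, IsProjOn W x y}

/-- The cone of positive semidefinite matrices. -/
def PSD (ι : Type*) [Fintype ι] : Set (Matrix ι ι ℝ) := {X | X.PosSemidef}

variable {r : ℕ}

/-- Index type for an `n₁ + ⋯ + n_r` block partition. -/
abbrev BIx (n : Fin r → ℕ) : Type := Σ i : Fin r, Fin (n i)

/-- The `(i,j)` block of a block matrix. -/
def blk {n : Fin r → ℕ} (X : Matrix (BIx n) (BIx n) ℝ) (i j : Fin r) :
    Matrix (Fin (n i)) (Fin (n j)) ℝ :=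
  Matrix.of fun a b => X ⟨i, a⟩ ⟨j, b⟩

/-- The space `V` of symmetric block matrices whose blocks lie in the subspaces `Vb i j`
(for `i ≤ j`; the diagonal subspaces `Vb i i` are required elsewhere to be `ℝ·I`). -/
def Vset (n : Fin r → ℕ)
    (Vb : ∀ i j : Fin r, Submodule ℝ (Matrix (Fin (n i)) (Fin (n j)) ℝ)) :
    Set (Matrix (BIx n) (BIx n) ℝ) :=
  {X | X.IsSymm ∧ ∀ i j : Fin r, i ≤ j → blk X i j ∈ Vb i j}

/-- The set `𝕋` of upper block-triangular matrices with diagonal blocks in `ℝ·I` and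
off-diagonal blocks in the `Vb i j`. -/
def TT (n : Fin r → ℕ)
    (Vb : ∀ i j : Fin r, Submodule ℝ (Matrix (Fin (n i)) (Fin (n j)) ℝ)) :
    Set (Matrix (BIx n) (BIx n) ℝ) :=
  {T | (∀ i j : Fin r, j < i → blk T i j = 0) ∧
    (∀ i : Fin r, ∃ c : ℝ, blk T i i = c • (1 : Matrix (Fin (n i)) (Fin (n i)) ℝ)) ∧
    (∀ i j : Fin r, i < j → blk T i j ∈ Vb i j)}

/-- The set `𝕋₊₊ ⊆ 𝕋` of matrices with positive diagonal entries. -/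
def TTpp (n : Fin r → ℕ)
    (Vb : ∀ i j : Fin r, Submodule ℝ (Matrix (Fin (n i)) (Fin (n j)) ℝ)) :
    Set (Matrix (BIx n) (BIx n) ℝ) :=
  {T | (∀ i j : Fin r, j < i → blk T i j = 0) ∧
    (∀ i : Fin r, ∃ c : ℝ, 0 < c ∧ blk T i i = c • (1 : Matrix (Fin (n i)) (Fin (n i)) ℝ)) ∧
    (∀ i j : Fin r, i < j → blk T i j ∈ Vb i j)}

/-- The Ishi spectrahedral cone `K = S^n_{++} ∩ V`. -/
def Kcone (n : Fin r → ℕ)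
    (Vb : ∀ i j : Fin r, Submodule ℝ (Matrix (Fin (n i)) (Fin (n j)) ℝ)) :
    Set (Matrix (BIx n) (BIx n) ℝ) :=
  {X | X.PosDef ∧ X ∈ Vset n Vb}

/-- The closure `S^n_+ ∩ V` of the Ishi spectrahedral cone. -/
def KclSet (n : Fin r → ℕ)
    (Vb : ∀ i j : Fin r, Submodule ℝ (Matrix (Fin (n i)) (Fin (n j)) ℝ)) :
    Set (Matrix (BIx n) (BIx n) ℝ) :=
  {X | X.PosSemidef ∧ X ∈ Vset n Vb}

/-- The dual cone `D = proj_V (S^n_+)` of `K` in `V`. -/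
def dualD (n : Fin r → ℕ)
    (Vb : ∀ i j : Fin r, Submodule ℝ (Matrix (Fin (n i)) (Fin (n j)) ℝ)) :
    Set (Matrix (BIx n) (BIx n) ℝ) :=
  projSet (Vset n Vb) (PSD (BIx n))

/-- The subspace `V^B` of matrices of `V` supported on blocks indexed by `B × B`. -/
def VBset (n : Fin r → ℕ)
    (Vb : ∀ i j : Fin r, Submodule ℝ (Matrix (Fin (n i)) (Fin (n j)) ℝ))
    (B : Finset (Fin r)) : Set (Matrix (BIx n) (BIx n) ℝ) :=
  {X | X ∈ Vset n Vb ∧ ∀ i j : Fin r, i ≤ j → (i ∉ B ∨ j ∉ B) → blk X i j = 0}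

/-- The matrix `I^B` whose diagonal blocks indexed by `B` are identity blocks and whose
other blocks vanish. -/
def IB (n : Fin r → ℕ) (B : Finset (Fin r)) : Matrix (BIx n) (BIx n) ℝ :=
  Matrix.of fun a b => if a = b ∧ a.1 ∈ B then 1 else 0

/-- The face `F_{T,B} = Tᵀ·(S^n_+ ∩ V^B)·T` of the closure `S^n_+ ∩ V`. -/
def FTB (n : Fin r → ℕ)
    (Vb : ∀ i j : Fin r, Submodule ℝ (Matrix (Fin (n i)) (Fin (n j)) ℝ))
    (T : Matrix (BIx n) (BIx n) ℝ) (B : Finset (Fin r)) :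
    Set (Matrix (BIx n) (BIx n) ℝ) :=
  {Y | ∃ X, Matrix.PosSemidef X ∧ X ∈ VBset n Vb B ∧ Y = Tᵀ * X * T}

/-- The face `F^*_{T,N} = proj_V (T · proj_{V^N}(S^n_+) · Tᵀ)` of the dual cone. -/
def FstarTN (n : Fin r → ℕ)
    (Vb : ∀ i j : Fin r, Submodule ℝ (Matrix (Fin (n i)) (Fin (n j)) ℝ))
    (T : Matrix (BIx n) (BIx n) ℝ) (N : Finset (Fin r)) :
    Set (Matrix (BIx n) (BIx n) ℝ) :=
  {Z | ∃ Y ∈ projSet (VBset n Vb N) (PSD (BIx n)), IsProjOn (Vset n Vb) (T * Y * Tᵀ) Z}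

section trInner

variable {l m o : Type*} [Fintype l] [Fintype m] [Fintype o]

lemma trInner_comm (X Y : Matrix l m ℝ) : trInner X Y = trInner Y X := by
  rw [trInner, trInner, ← trace_transpose, transpose_mul, transpose_transpose]

lemma trInner_self_eq_zero_iff {X : Matrix l m ℝ} : trInner X X = 0 ↔ X = 0 := by
  rw [trInner, ← conjTranspose_eq_transpose_of_trivial]
  exact trace_conjTranspose_mul_self_eq_zero_iff

lemma trInner_mul_left (A : Matrix l m ℝ) (X : Matrix m o ℝ) (Y : Matrix l o ℝ) :
    trInner (A * X) Y = trInner X (Aᵀ * Y) := by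
  rw [trInner, trInner, transpose_mul, Matrix.mul_assoc]

lemma trInner_smul_sub_smul_self (a b : ℝ) (X Y : Matrix l m ℝ) :
    trInner (a • X - b • Y) (a • X - b • Y) =
      a * a * trInner X X - 2 * a * b * trInner X Y + b * b * trInner Y Y := by
  have hYX := trInner_comm Y X
  simp only [trInner, transpose_sub, transpose_smul, Matrix.sub_mul, Matrix.mul_sub,
    Matrix.smul_mul, Matrix.mul_smul, trace_sub, trace_smul, smul_eq_mul] at hYX ⊢
  rw [hYX]
  ring

lemma trInner_self_of_transpose_mul_self_eq_smul_one [DecidableEq m] {A : Matrix l m ℝ} {c : ℝ}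
    (hA : Aᵀ * A = c • (1 : Matrix m m ℝ)) : trInner A A = c * Fintype.card m := by
  rw [trInner, hA, trace_smul, trace_one, smul_eq_mul]

/-- Since `AᵀA = c·I`, `B ↦ A(AᵀB)` is `c` times the orthogonal projection onto the range of `A`:
in the expanded square the cross term is `‖AᵀB‖²`, the last term `c‖AᵀB‖²`, and `‖A‖² = c·card m`. -/
theorem trInner_self_smul_sub_mul_transpose_mul [DecidableEq m] {A : Matrix l m ℝ} {c : ℝ}
    (hA : Aᵀ * A = c • (1 : Matrix m m ℝ)) (B : Matrix l o ℝ) :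
    trInner (trInner A A • B - (Fintype.card m : ℝ) • (A * (Aᵀ * B)))
        (trInner A A • B - (Fintype.card m : ℝ) • (A * (Aᵀ * B))) =
      trInner A A * (trInner A A * trInner B B -
        Fintype.card m * trInner (Aᵀ * B) (Aᵀ * B)) := by
  have hcross : trInner B (A * (Aᵀ * B)) = trInner (Aᵀ * B) (Aᵀ * B) := by
    rw [trInner_comm, trInner_mul_left]
  have hsq : trInner (A * (Aᵀ * B)) (A * (Aᵀ * B)) = c * trInner (Aᵀ * B) (Aᵀ * B) := by
    rw [trInner_mul_left, ← Matrix.mul_assoc, hA, smul_mul, Matrix.one_mul, trInner,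
      Matrix.mul_smul, trace_smul, smul_eq_mul, trInner]
  rw [trInner_smul_sub_smul_self, hcross, hsq,
    trInner_self_of_transpose_mul_self_eq_smul_one hA]
  ring

theorem trInner_mul_eq_iff_smul_eq [DecidableEq m] {A : Matrix l m ℝ} {c : ℝ}
    (hA : Aᵀ * A = c • (1 : Matrix m m ℝ)) (B : Matrix l o ℝ) :
    trInner A A * trInner B B = Fintype.card m * trInner (Aᵀ * B) (Aᵀ * B) ↔
      trInner A A • B = (Fintype.card m : ℝ) • (A * (Aᵀ * B)) := by
  have key := trInner_self_smul_sub_mul_transpose_mul hA B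
  constructor
  · intro h
    rw [h, sub_self, mul_zero, trInner_self_eq_zero_iff, sub_eq_zero] at key
    exact key
  · intro h
    have hprod : trInner A A * (trInner A A * trInner B B -
        Fintype.card m * trInner (Aᵀ * B) (Aᵀ * B)) = 0 := by
      rw [← key, h, sub_self, trInner_self_eq_zero_iff.mpr rfl]
    rcases mul_eq_zero.mp hprod with hA0 | hdiff
    · simp [trInner_self_eq_zero_iff.mp hA0, trInner]
    · exact sub_eq_zero.mp hdiff

end trInner

theorem norm_identity_LL_general (r : ℕ)
    (n : Fin r → ℕ)
    (Vb : ∀ i j : Fin r, Submodule ℝ (Matrix (Fin (n i)) (Fin (n j)) ℝ))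
    (hV3 : ∀ i j : Fin r, i ≤ j → ∀ A ∈ Vb i j,
      ∃ c : ℝ, Aᵀ * A = c • (1 : Matrix (Fin (n j)) (Fin (n j)) ℝ))
    (i j k : Fin r) (hij : i < j)
    (A : Matrix (Fin (n i)) (Fin (n j)) ℝ) (hA : A ∈ Vb i j)
    (B : Matrix (Fin (n i)) (Fin (n k)) ℝ) :
    (trInner ((trInner A A) • B - (n j : ℝ) • (A * (Aᵀ * B)))
             ((trInner A A) • B - (n j : ℝ) • (A * (Aᵀ * B)))
      = trInner A A * (trInner A A * trInner B B - (n j : ℝ) * trInner (Aᵀ * B) (Aᵀ * B))) ∧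
    (trInner A A * trInner B B = (n j : ℝ) * trInner (Aᵀ * B) (Aᵀ * B) ↔
      (trInner A A) • B = (n j : ℝ) • (A * (Aᵀ * B))) := by
  obtain ⟨c, hc⟩ := hV3 i j hij.le A hA
  simpa only [Fintype.card_fin] using
    And.intro (trInner_self_smul_sub_mul_transpose_mul hc B) (trInner_mul_eq_iff_smul_eq hc B)

/-- **A norm identity for `L_A L_A^*`.**
For `1 ≤ i < j < k ≤ r`, `A ∈ V_{ij}` and `B ∈ V_{ik}`:
`‖ ‖A‖²·B − n_j·A·(Aᵀ·B) ‖² = ‖A‖²·(‖A‖²‖B‖² − n_j‖Aᵀ·B‖²)`; consequently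
`‖A‖²‖B‖² = n_j‖Aᵀ·B‖²` holds iff `‖A‖²·B = n_j·A·(Aᵀ·B)`. -/
theorem norm_identity_LL (r : ℕ) (hr : 1 ≤ r)
    (n : Fin r → ℕ) (hn : ∀ i, 0 < n i)
    (Vb : ∀ i j : Fin r, Submodule ℝ (Matrix (Fin (n i)) (Fin (n j)) ℝ))
    (hdiag : ∀ i : Fin r, Vb i i = Submodule.span ℝ {(1 : Matrix (Fin (n i)) (Fin (n i)) ℝ)})
    (hV1 : ∀ i j k : Fin r, i ≤ j → j ≤ k → ∀ A ∈ Vb i j, ∀ B ∈ Vb j k, A * B ∈ Vb i k)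
    (hV2 : ∀ i j k : Fin r, i ≤ j → j < k → ∀ A ∈ Vb i j, ∀ B ∈ Vb i k, Aᵀ * B ∈ Vb j k)
    (hV3 : ∀ i j : Fin r, i ≤ j → ∀ A ∈ Vb i j,
      ∃ c : ℝ, Aᵀ * A = c • (1 : Matrix (Fin (n j)) (Fin (n j)) ℝ))
    (i j k : Fin r) (hij : i < j) (hjk : j < k)
    (A : Matrix (Fin (n i)) (Fin (n j)) ℝ) (hA : A ∈ Vb i j)
    (B : Matrix (Fin (n i)) (Fin (n k)) ℝ) (hB : B ∈ Vb i k) :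
    (trInner ((trInner A A) • B - (n j : ℝ) • (A * (Aᵀ * B)))
             ((trInner A A) • B - (n j : ℝ) • (A * (Aᵀ * B)))
      = trInner A A * (trInner A A * trInner B B - (n j : ℝ) * trInner (Aᵀ * B) (Aᵀ * B))) ∧
    (trInner A A * trInner B B = (n j : ℝ) * trInner (Aᵀ * B) (Aᵀ * B) ↔
      (trInner A A) • B = (n j : ℝ) • (A * (Aᵀ * B))) :=
  norm_identity_LL_general r n Vb hV3 i j k hij A hA B
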